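/- (Adequacy of LNS_Kt) For every formula φ built from atoms, ⊥, →, □, ■: the linear nested sequent ε ⇒ φ is derivable in LNS_Kt if and only if φ is valid (forced at every world of every Kripke model). -/

import Mathlib

/-- Formulae of tense logic: atoms (indexed by naturals), ⊥, →, □, ◇, ■, ◆. -/
inductive Formula : Type
  | atom : ℕ → Formula
  | bot : Formula
  | imp : Formula → Formula → Formula
  | box : Formula → Formula
  | dia : Formula → Formula
  | bbox : Formula → Formula
  | bdia : Formula → Formula

def Formula.neg (A : Formula) : Formula := A.imp .bot
def Formula.and (A B : Formula) : Formula := (A.imp B.neg).neg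
def Formula.or (A B : Formula) : Formula := A.neg.imp B
def Formula.top : Formula := Formula.bot.imp .bot

/-- Formulas built from atoms, ⊥, →, □, ■ only (no diamonds). -/
def Formula.NoDia : Formula → Prop
  | .atom _ => True
  | .bot => True
  | .imp A B => A.NoDia ∧ B.NoDia
  | .box A => A.NoDia
  | .dia _ => False
  | .bbox A => A.NoDia
  | .bdia _ => False

/-- Structural connectives: `up` is ↗ and `dn` is ↙. -/
inductive Dir : Type
  | up
  | dn

/-- Linear nested sequents: a nonempty list of components `Γ ⇒ Δ`
joined by the structural connectives ↗ (`up`) and ↙ (`dn`). -/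
inductive LNS : Type
  | single (Γ Δ : Multiset Formula) : LNS
  | up (Γ Δ : Multiset Formula) (S : LNS) : LNS
  | dn (Γ Δ : Multiset Formula) (S : LNS) : LNS

/-- A (possibly empty) context: a list of components, each together with the
structural connective joining it to what follows. -/
abbrev Ctx := List (Multiset Formula × Multiset Formula × Dir)

/-- `plug G S` is the linear nested sequent `G ⇗ S` (just `S` when `G` is empty). -/
def plug : Ctx → LNS → LNS
  | [], S => S
  | (Γ, Δ, Dir.up) :: G, S => LNS.up Γ Δ (plug G S)
  | (Γ, Δ, Dir.dn) :: G, S => LNS.dn Γ Δ (plug G S)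

/-- The structural connective joining the context to what follows it (none if empty). -/
def lastDir : Ctx → Option Dir
  | [] => none
  | [(_, _, d)] => some d
  | _ :: G => lastDir G

/-- Kripke forcing for tense logic. -/
def Force {W : Type} (R : W → W → Prop) (V : W → ℕ → Prop) : W → Formula → Prop
  | w, .atom p => V w p
  | _, .bot => False
  | w, .imp A B => Force R V w A → Force R V w B
  | w, .box A => ∀ v, R w v → Force R V v A
  | w, .dia A => ∃ v, R w v ∧ Force R V v A
  | w, .bbox A => ∀ v, R v w → Force R V v A
  | w, .bdia A => ∃ v, R v w ∧ Force R V v A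

/-- Conjunction of a finite multiset of formulae (empty conjunction is ⊤). -/
noncomputable def bigAnd (Γ : Multiset Formula) : Formula :=
  Γ.toList.foldr Formula.and Formula.top

/-- Disjunction of a finite multiset of formulae (empty disjunction is ⊥). -/
noncomputable def bigOr (Δ : Multiset Formula) : Formula :=
  Δ.toList.foldr Formula.or Formula.bot

/-- The formula translation τ of a linear nested sequent. -/
noncomputable def tau : LNS → Formula
  | .single Γ Δ => (bigAnd Γ).imp (bigOr Δ)
  | .up Γ Δ S => (bigAnd Γ).imp ((bigOr Δ).or (tau S).box)
  | .dn Γ Δ S => (bigAnd Γ).imp ((bigOr Δ).or (tau S).bbox)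

/-- A formula is valid if it is forced at every world of every Kripke model. -/
def Valid (A : Formula) : Prop :=
  ∀ (W : Type) (_ : Nonempty W) (R : W → W → Prop) (V : W → ℕ → Prop) (w : W),
    Force R V w A

/-- A linear nested sequent is falsifiable if its formula translation fails at
some world of some Kripke model. -/
def Falsifiable (S : LNS) : Prop :=
  ∃ (W : Type) (_ : Nonempty W) (R : W → W → Prop) (V : W → ℕ → Prop) (w : W),
    ¬ Force R V w (tau S)

/-- The calculus LNS_Kt. -/
inductive Deriv : LNS → Prop
  | id (G : Ctx) (Γ Δ : Multiset Formula) (p : ℕ) :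
      Deriv (plug G (.single (.atom p ::ₘ Γ) (.atom p ::ₘ Δ)))
  | botL (G : Ctx) (Γ Δ : Multiset Formula) :
      Deriv (plug G (.single (.bot ::ₘ Γ) Δ))
  | ew (G : Ctx) (Θ Λ : Multiset Formula) (d : Dir) (Γ Δ : Multiset Formula) :
      Deriv (plug G (.single Θ Λ)) →
      Deriv (plug (G ++ [(Θ, Λ, d)]) (.single Γ Δ))
  | impR (G : Ctx) (Γ Δ : Multiset Formula) (A B : Formula) :
      Deriv (plug G (.single (A ::ₘ Γ) (B ::ₘ A.imp B ::ₘ Δ))) →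
      Deriv (plug G (.single Γ (A.imp B ::ₘ Δ)))
  | impL (G : Ctx) (Γ Δ : Multiset Formula) (A B : Formula) :
      Deriv (plug G (.single (B ::ₘ A.imp B ::ₘ Γ) Δ)) →
      Deriv (plug G (.single (A.imp B ::ₘ Γ) (A ::ₘ Δ))) →
      Deriv (plug G (.single (A.imp B ::ₘ Γ) Δ))
  | boxR1 (G : Ctx) (Γ Δ Θ Λ : Multiset Formula) (A : Formula) :
      Deriv (plug G (.dn Γ (A ::ₘ Δ) (.single Θ (A.box ::ₘ Λ)))) →
      Deriv (plug G (.dn Γ Δ (.up Θ (A.box ::ₘ Λ) (.single 0 {A})))) →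
      Deriv (plug G (.dn Γ Δ (.single Θ (A.box ::ₘ Λ))))
  | bboxR1 (G : Ctx) (Γ Δ Θ Λ : Multiset Formula) (A : Formula) :
      Deriv (plug G (.up Γ (A ::ₘ Δ) (.single Θ (A.bbox ::ₘ Λ)))) →
      Deriv (plug G (.up Γ Δ (.dn Θ (A.bbox ::ₘ Λ) (.single 0 {A})))) →
      Deriv (plug G (.up Γ Δ (.single Θ (A.bbox ::ₘ Λ))))
  | boxR2 (G : Ctx) (Γ Δ : Multiset Formula) (A : Formula) :
      lastDir G ≠ some Dir.dn →
      Deriv (plug G (.up Γ (A.box ::ₘ Δ) (.single 0 {A}))) →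
      Deriv (plug G (.single Γ (A.box ::ₘ Δ)))
  | bboxR2 (G : Ctx) (Γ Δ : Multiset Formula) (A : Formula) :
      lastDir G ≠ some Dir.up →
      Deriv (plug G (.dn Γ (A.bbox ::ₘ Δ) (.single 0 {A}))) →
      Deriv (plug G (.single Γ (A.bbox ::ₘ Δ)))
  | boxL1 (G : Ctx) (Γ Δ Θ Λ : Multiset Formula) (A : Formula) :
      Deriv (plug G (.up (A.box ::ₘ Γ) Δ (.single (A ::ₘ Θ) Λ))) →
      Deriv (plug G (.up (A.box ::ₘ Γ) Δ (.single Θ Λ)))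
  | bboxL1 (G : Ctx) (Γ Δ Θ Λ : Multiset Formula) (A : Formula) :
      Deriv (plug G (.dn (A.bbox ::ₘ Γ) Δ (.single (A ::ₘ Θ) Λ))) →
      Deriv (plug G (.dn (A.bbox ::ₘ Γ) Δ (.single Θ Λ)))
  | boxL2 (G : Ctx) (Γ Δ Θ Λ : Multiset Formula) (A : Formula) :
      Deriv (plug G (.single (A ::ₘ Γ) Δ)) →
      Deriv (plug G (.dn Γ Δ (.single (A.box ::ₘ Θ) Λ)))
  | bboxL2 (G : Ctx) (Γ Δ Θ Λ : Multiset Formula) (A : Formula) :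
      Deriv (plug G (.single (A ::ₘ Γ) Δ)) →
      Deriv (plug G (.up Γ Δ (.single (A.bbox ::ₘ Θ) Λ)))

/-!
Soundness: every rule preserves truth of the formula translation in every model, and since a
rule acts at the end of a context it is enough to check it on its active components.

Completeness: backward proof search on an underivable sequent builds a tree of sequents that is
saturated under the propositional rules, closed under the flow of □ and ■ along its edges, and
has a ↗-child (↙-child) witnessing each □A (■A) on the right. Such a tree is a Hintikka
structure, hence a countermodel. The search stays among the subformulas of the end-sequent of
bounded modal depth; it terminates by induction on the depth and, at a fixed depth, on the
number of formulas still missing from the current sequent, which decreases each time the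
sequent is enlarged, also when a child sends formulas back to its parent.
-/

deriving instance DecidableEq for Formula

theorem Set.Finite.exists_list_forall_exists {α β : Type*} {s : Set α} (hs : s.Finite)
    {p : α → β → Prop} (h : ∀ a ∈ s, ∃ b, p a b) :
    ∃ l : List β, (∀ b ∈ l, ∃ a ∈ s, p a b) ∧ ∀ a ∈ s, ∃ b ∈ l, p a b := by
  choose f hf using h
  refine ⟨hs.toFinset.attach.toList.map fun a => f a.1 (hs.mem_toFinset.1 a.2), ?_, ?_⟩
  · simp only [List.mem_map, Finset.mem_toList, Finset.mem_attach, true_and]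
    rintro _ ⟨a, rfl⟩
    exact ⟨a.1, hs.mem_toFinset.1 a.2, hf _ _⟩
  · intro a ha
    exact ⟨_, List.mem_map.2 ⟨⟨a, hs.mem_toFinset.2 ha⟩, by simp, rfl⟩, hf a ha⟩

namespace Dir

def flip : Dir → Dir
  | up => dn
  | dn => up

def box : Dir → Formula → Formula
  | up => .box
  | dn => .bbox

def rel {W : Type} (R : W → W → Prop) : Dir → W → W → Prop
  | up => R
  | dn => fun w v => R v w

@[simp] lemma flip_flip (d : Dir) : d.flip.flip = d := by cases d <;> rfl

lemma box_inj {d e : Dir} {A B : Formula} : d.box A = e.box B ↔ d = e ∧ A = B := by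
  cases d <;> cases e <;> simp [box]

end Dir

lemma plug_append (G H : Ctx) (S : LNS) : plug (G ++ H) S = plug G (plug H S) := by
  induction G with
  | nil => rfl
  | cons c G ih => obtain ⟨Γ, Δ, _ | _⟩ := c <;> simp [plug, ih]

lemma lastDir_eq_getLast? (G : Ctx) : lastDir G = G.getLast?.map (·.2.2) := by
  induction G with
  | nil => rfl
  | cons c G ih => cases G <;> simp_all [lastDir]

section Soundness

variable {W : Type} {R : W → W → Prop} {V : W → ℕ → Prop} {w : W}

@[simp] lemma force_imp {A B : Formula} :
    Force R V w (A.imp B) ↔ (Force R V w A → Force R V w B) := Iff.rfl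

@[simp] lemma force_bot : ¬ Force R V w .bot := id

@[simp] lemma force_or {A B : Formula} :
    Force R V w (A.or B) ↔ Force R V w A ∨ Force R V w B := by
  simp only [Formula.or, Formula.neg, force_imp, force_bot]; tauto

lemma force_dir_box (d : Dir) {A : Formula} :
    Force R V w (d.box A) ↔ ∀ v, d.rel R w v → Force R V v A := by
  cases d <;> rfl

@[simp] lemma force_bigAnd {Γ : Multiset Formula} :
    Force R V w (bigAnd Γ) ↔ ∀ A ∈ Γ, Force R V w A := by
  rw [bigAnd]
  simp_rw [← Multiset.mem_toList]
  induction Γ.toList with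
  | nil => simp [Formula.top, Force]
  | cons A l ih => simp [Formula.and, Formula.neg, ih]

@[simp] lemma force_bigOr {Δ : Multiset Formula} :
    Force R V w (bigOr Δ) ↔ ∃ A ∈ Δ, Force R V w A := by
  rw [bigOr]
  simp_rw [← Multiset.mem_toList]
  induction Δ.toList with
  | nil => simp
  | cons A l ih => simp [ih]

@[simp] lemma force_tau_single {Γ Δ : Multiset Formula} :
    Force R V w (tau (.single Γ Δ)) ↔ ((∀ A ∈ Γ, Force R V w A) → ∃ B ∈ Δ, Force R V w B) := by
  simp [tau]

lemma force_tau_plug_cons {Γ Δ : Multiset Formula} {d : Dir} {G : Ctx} {S : LNS} :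
    Force R V w (tau (plug ((Γ, Δ, d) :: G) S)) ↔ ((∀ A ∈ Γ, Force R V w A) →
      (∃ B ∈ Δ, Force R V w B) ∨ ∀ v, d.rel R w v → Force R V v (tau (plug G S))) := by
  cases d <;> simp [plug, tau, Force, Dir.rel]

lemma force_tau_plug_of_forall {Ps : List LNS} {S : LNS}
    (h : ∀ w, (∀ P ∈ Ps, Force R V w (tau P)) → Force R V w (tau S)) (G : Ctx) (w : W)
    (hPs : ∀ P ∈ Ps, Force R V w (tau (plug G P))) : Force R V w (tau (plug G S)) := by
  induction G generalizing w with
  | nil => exact h w hPs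
  | cons c G ih =>
    obtain ⟨Γ, Δ, d⟩ := c
    simp only [force_tau_plug_cons] at hPs ⊢
    intro hΓ
    by_cases hΔ : ∃ B ∈ Δ, Force R V w B
    · exact Or.inl hΔ
    · exact Or.inr fun v hv => ih v fun P hP => ((hPs P hP hΓ).resolve_left hΔ) v hv

theorem force_tau_of_deriv {S : LNS} (h : Deriv S) (R : W → W → Prop) (V : W → ℕ → Prop) (w : W) :
    Force R V w (tau S) := by
  induction h generalizing w with
  | id G Γ Δ p =>
    refine force_tau_plug_of_forall (Ps := []) (fun w _ => ?_) G w (by simp)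
    simp_all
  | botL G Γ Δ =>
    refine force_tau_plug_of_forall (Ps := []) (fun w _ => ?_) G w (by simp)
    simp
  | ew G Θ Λ d Γ Δ _ ih =>
    rw [plug_append]
    refine force_tau_plug_of_forall (Ps := [_]) (fun w hP => ?_) G w (by simpa using ih w)
    simp_all [force_tau_plug_cons]
  | impR G Γ Δ A B _ ih =>
    refine force_tau_plug_of_forall (Ps := [_]) (fun w hP => ?_) G w (by simpa using ih w)
    simp only [List.mem_cons, List.not_mem_nil, or_false, forall_eq, tau, force_imp, force_bigAnd,
      Multiset.mem_cons, forall_eq_or_imp, force_bigOr, exists_eq_or_imp, Force, and_imp] at hP ⊢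
    tauto
  | impL G Γ Δ A B _ _ ih1 ih2 =>
    refine force_tau_plug_of_forall (Ps := [_, _]) (fun w hP => ?_) G w
      (by simpa using ⟨ih1 w, ih2 w⟩)
    simp only [List.mem_cons, List.not_mem_nil, or_false, forall_eq_or_imp, tau, force_imp,
      force_bigAnd, Multiset.mem_cons, Force, force_bigOr, and_imp, forall_eq,
      exists_eq_or_imp] at hP ⊢
    tauto
  | boxR1 G Γ Δ Θ Λ A _ _ _ ih | bboxR1 G Γ Δ Θ Λ A _ _ _ ih =>
    refine force_tau_plug_of_forall (Ps := [_]) (fun w hP => ?_) G w (by simpa using ih w)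
    simp only [List.mem_cons, List.not_mem_nil, or_false, forall_eq, tau, force_imp, force_bigAnd,
      force_or, force_bigOr, Force, Multiset.mem_cons, exists_eq_or_imp, Multiset.notMem_zero,
      IsEmpty.forall_iff, implies_true, Multiset.mem_singleton, exists_eq_left,
      forall_const] at hP ⊢
    refine fun hΓ => (hP hΓ).imp id fun h v hv hΘ => ?_
    rcases h v hv hΘ with h | h <;> tauto
  | boxR2 G Γ Δ A _ _ ih | bboxR2 G Γ Δ A _ _ ih =>
    refine force_tau_plug_of_forall (Ps := [_]) (fun w hP => ?_) G w (by simpa using ih w)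
    simp only [List.mem_cons, List.not_mem_nil, or_false, forall_eq, tau, force_imp, force_bigAnd,
      force_or, force_bigOr, Force, Multiset.mem_cons, exists_eq_or_imp, Multiset.notMem_zero,
      IsEmpty.forall_iff, implies_true, Multiset.mem_singleton, exists_eq_left,
      forall_const] at hP ⊢
    tauto
  | boxL1 G Γ Δ Θ Λ A _ ih | bboxL1 G Γ Δ Θ Λ A _ ih =>
    refine force_tau_plug_of_forall (Ps := [_]) (fun w hP => ?_) G w (by simpa using ih w)
    simp only [List.mem_cons, List.not_mem_nil, or_false, forall_eq, tau, force_imp, force_bigAnd,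
      Multiset.mem_cons, forall_eq_or_imp, Force, force_or, force_bigOr, and_imp] at hP ⊢
    exact fun hA hΓ => (hP hA hΓ).imp id fun h v hv hΘ => h v hv (hA v hv) hΘ
  | boxL2 G Γ Δ Θ Λ A _ ih | bboxL2 G Γ Δ Θ Λ A _ ih =>
    refine force_tau_plug_of_forall (Ps := [_]) (fun w hP => ?_) G w (by simpa using ih w)
    simp only [List.mem_cons, List.not_mem_nil, or_false, forall_eq, tau, force_imp, force_bigAnd,
      Multiset.mem_cons, forall_eq_or_imp, Force, force_or, force_bigOr, and_imp] at hP ⊢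
    intro hΓ
    by_cases hΔ : ∃ B ∈ Δ, Force R V w B
    · exact Or.inl hΔ
    · exact Or.inr fun v hv hA _ => absurd (hP (hA w hv) hΓ) hΔ

end Soundness

structure Saturated (Γ Δ : Multiset Formula) : Prop where
  atom : ∀ p, .atom p ∈ Γ → .atom p ∉ Δ
  bot : .bot ∉ Γ
  imp_left : ∀ A B, A.imp B ∈ Γ → B ∈ Γ ∨ A ∈ Δ
  imp_right : ∀ A B, A.imp B ∈ Δ → A ∈ Γ ∧ B ∈ Δ

structure IsHintikka {W : Type} (R : W → W → Prop) (Γ Δ : W → Multiset Formula) : Prop where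
  saturated : ∀ w, Saturated (Γ w) (Δ w)
  box_left : ∀ (d : Dir) w v A, d.rel R w v → d.box A ∈ Γ w → A ∈ Γ v
  box_right : ∀ (d : Dir) w A, d.box A ∈ Δ w → ∃ v, d.rel R w v ∧ A ∈ Δ v

def atomVal {W : Type} (Γ : W → Multiset Formula) (w : W) (p : ℕ) : Prop := .atom p ∈ Γ w

namespace IsHintikka

variable {W : Type} {R : W → W → Prop} {Γ Δ : W → Multiset Formula}

lemma truth_dir_box (hH : IsHintikka R Γ Δ) (d : Dir) {A : Formula}
    (ih : ∀ w, (A ∈ Γ w → Force R (atomVal Γ) w A) ∧ (A ∈ Δ w → ¬ Force R (atomVal Γ) w A))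
    (w : W) :
    (d.box A ∈ Γ w → Force R (atomVal Γ) w (d.box A)) ∧
      (d.box A ∈ Δ w → ¬ Force R (atomVal Γ) w (d.box A)) := by
  simp only [force_dir_box]
  refine ⟨fun h v hv => (ih v).1 (hH.box_left d w v A hv h), fun h hA => ?_⟩
  obtain ⟨v, hv, hAv⟩ := hH.box_right d w A h
  exact (ih v).2 hAv (hA v hv)

theorem truth (hH : IsHintikka R Γ Δ) {A : Formula} (hnd : A.NoDia) (w : W) :
    (A ∈ Γ w → Force R (atomVal Γ) w A) ∧ (A ∈ Δ w → ¬ Force R (atomVal Γ) w A) := by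
  induction A generalizing w with
  | atom p => exact ⟨id, fun hΔ hΓ => (hH.saturated w).atom p hΓ hΔ⟩
  | bot => exact ⟨fun h => absurd h (hH.saturated w).bot, fun _ => id⟩
  | imp A B ihA ihB =>
    replace ihA := ihA hnd.1 w
    replace ihB := ihB hnd.2 w
    refine ⟨fun h hA => ?_, fun h hf => ?_⟩
    · rcases (hH.saturated w).imp_left A B h with hB | hA'
      exacts [ihB.1 hB, absurd hA (ihA.2 hA')]
    · obtain ⟨hA, hB⟩ := (hH.saturated w).imp_right A B h
      exact ihB.2 hB (hf (ihA.1 hA))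
  | box A ih => exact hH.truth_dir_box .up (ih hnd) w
  | bbox A ih => exact hH.truth_dir_box .dn (ih hnd) w
  | dia | bdia => exact hnd.elim

end IsHintikka

abbrev Component : Type := Multiset Formula × Multiset Formula × Dir

structure SearchTree where
  ante : Multiset Formula
  succ : Multiset Formula
  children : List (Dir × SearchTree)

/-- `par` is the component a node hangs from, together with the connective joining it to the
node; it is `none` at the root. -/
def FlowsFrom (par : Option Component) (Γ : Multiset Formula) : Prop :=
  ∀ Sg Pg d, par = some (Sg, Pg, d) → (∀ A, d.box A ∈ Sg → A ∈ Γ) ∧ ∀ A, d.flip.box A ∈ Γ → A ∈ Sg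

def ParentWitness (par : Option Component) (d : Dir) (A : Formula) : Prop :=
  ∃ Sg Pg, par = some (Sg, Pg, d.flip) ∧ A ∈ Pg

inductive Good : Option Component → SearchTree → Prop
  | mk {par Γ Δ ch} (saturated : Saturated Γ Δ) (flows : FlowsFrom par Γ)
      (witnessed : ∀ (d : Dir) A, d.box A ∈ Δ →
        ParentWitness par d A ∨ ∃ N, (d, N) ∈ ch ∧ A ∈ N.succ)
      (children : ∀ d N, (d, N) ∈ ch → Good (some (Γ, Δ, d)) N) :
      Good par ⟨Γ, Δ, ch⟩

namespace Good

variable {par : Option Component} {T : SearchTree}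

lemma saturated : Good par T → Saturated T.ante T.succ
  | mk h _ _ _ => h

lemma flows : Good par T → FlowsFrom par T.ante
  | mk _ h _ _ => h

lemma witnessed : Good par T → ∀ (d : Dir) A, d.box A ∈ T.succ →
    ParentWitness par d A ∨ ∃ N, (d, N) ∈ T.children ∧ A ∈ N.succ
  | mk _ _ h _ => h

lemma child : Good par T → ∀ d N, (d, N) ∈ T.children → Good (some (T.ante, T.succ, d)) N
  | mk _ _ _ h => h

end Good

namespace SearchTree

def IsChild (N M : SearchTree) : Prop := ∃ d, (d, M) ∈ N.children

/-- Worlds are reachable subtrees rather than positions: every condition of `Good` concerns a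
single edge, so identifying equal subtrees does no harm. -/
def World (T : SearchTree) : Type := {N // Relation.ReflTransGen IsChild T N}

variable {T : SearchTree}

def Rel (x y : World T) : Prop :=
  (Dir.up, y.1) ∈ x.1.children ∨ (Dir.dn, x.1) ∈ y.1.children

lemma dir_rel_iff {d : Dir} {x y : World T} :
    d.rel Rel x y ↔ (d, y.1) ∈ x.1.children ∨ (d.flip, x.1) ∈ y.1.children := by
  cases d
  · rfl
  · exact or_comm

lemma good_of_reachable (hT : Good none T) {N : SearchTree}
    (hN : Relation.ReflTransGen IsChild T N) :
    ∃ par, Good par N ∧ (par = none ∨ ∃ P d, Relation.ReflTransGen IsChild T P ∧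
      (d, N) ∈ P.children ∧ par = some (P.ante, P.succ, d)) := by
  induction hN with
  | refl => exact ⟨none, hT, Or.inl rfl⟩
  | tail hP hPN ih =>
    obtain ⟨d, hd⟩ := hPN
    obtain ⟨_, hgood, -⟩ := ih
    exact ⟨_, hgood.child d _ hd, Or.inr ⟨_, d, hP, hd, rfl⟩⟩

theorem isHintikka (hT : Good none T) :
    IsHintikka (Rel (T := T)) (fun x => x.1.ante) (fun x => x.1.succ) where
  saturated x := (good_of_reachable hT x.2).choose_spec.1.saturated
  box_left d x y A hxy hA := by
    rcases dir_rel_iff.1 hxy with h | h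
    · obtain ⟨_, hx, -⟩ := good_of_reachable hT x.2
      exact ((hx.child d _ h).flows _ _ _ rfl).1 A hA
    · obtain ⟨_, hy, -⟩ := good_of_reachable hT y.2
      exact ((hy.child _ _ h).flows _ _ _ rfl).2 A (by rwa [Dir.flip_flip])
  box_right d x A hA := by
    obtain ⟨par, hx, hpar⟩ := good_of_reachable hT x.2
    rcases hx.witnessed d A hA with ⟨Sg, Pg, hSP, hAP⟩ | ⟨N, hN, hAN⟩
    · obtain ⟨P, e, hP, he, rfl⟩ := hpar.resolve_left (by simp [hSP])
      simp only [Option.some.injEq, Prod.mk.injEq] at hSP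
      obtain ⟨-, rfl, rfl⟩ := hSP
      exact ⟨⟨P, hP⟩, dir_rel_iff.2 (Or.inr he), hAP⟩
    · exact ⟨⟨N, x.2.tail ⟨d, hN⟩⟩, dir_rel_iff.2 (Or.inl hN), hAN⟩

end SearchTree

theorem not_valid_of_good {T : SearchTree} (hT : Good none T) {φ : Formula} (hφ : φ.NoDia)
    (h : φ ∈ T.succ) : ¬ Valid φ := fun hv =>
  ((SearchTree.isHintikka hT).truth hφ ⟨T, .refl⟩).2 h (hv _ ⟨⟨T, .refl⟩⟩ _ _ _)

namespace Deriv

variable {G H : Ctx} {Γ Δ Sg Pg : Multiset Formula} {A B : Formula}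

lemma of_bot_mem (h : .bot ∈ Γ) : Deriv (plug G (.single Γ Δ)) := by
  obtain ⟨Γ, rfl⟩ := Multiset.exists_cons_of_mem h
  exact botL G Γ Δ

lemma of_atom_mem {p : ℕ} (hΓ : .atom p ∈ Γ) (hΔ : .atom p ∈ Δ) :
    Deriv (plug G (.single Γ Δ)) := by
  obtain ⟨Γ, rfl⟩ := Multiset.exists_cons_of_mem hΓ
  obtain ⟨Δ, rfl⟩ := Multiset.exists_cons_of_mem hΔ
  exact id G Γ Δ p

lemma impL_of_mem (h : A.imp B ∈ Γ) (h₁ : Deriv (plug G (.single (B ::ₘ Γ) Δ)))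
    (h₂ : Deriv (plug G (.single Γ (A ::ₘ Δ)))) : Deriv (plug G (.single Γ Δ)) := by
  obtain ⟨Γ, rfl⟩ := Multiset.exists_cons_of_mem h
  exact impL G Γ Δ A B h₁ h₂

lemma impR_of_mem (h : A.imp B ∈ Δ) (h₁ : Deriv (plug G (.single (A ::ₘ Γ) (B ::ₘ Δ)))) :
    Deriv (plug G (.single Γ Δ)) := by
  obtain ⟨Δ, rfl⟩ := Multiset.exists_cons_of_mem h
  exact impR G Γ Δ A B h₁

lemma boxL1_of_mem (d : Dir) (h : d.box A ∈ Sg)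
    (h₁ : Deriv (plug (H ++ [(Sg, Pg, d)]) (.single (A ::ₘ Γ) Δ))) :
    Deriv (plug (H ++ [(Sg, Pg, d)]) (.single Γ Δ)) := by
  obtain ⟨Sg, rfl⟩ := Multiset.exists_cons_of_mem h
  cases d <;> simp only [plug_append, plug] at h₁ ⊢
  exacts [boxL1 H Sg Pg Γ Δ A h₁, bboxL1 H Sg Pg Γ Δ A h₁]

lemma boxL2_of_mem (d : Dir) (h : d.flip.box A ∈ Γ) (h₁ : Deriv (plug H (.single (A ::ₘ Sg) Pg))) :
    Deriv (plug (H ++ [(Sg, Pg, d)]) (.single Γ Δ)) := by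
  obtain ⟨Γ, rfl⟩ := Multiset.exists_cons_of_mem h
  cases d <;> simp only [plug_append, plug]
  exacts [bboxL2 H Sg Pg Γ Δ A h₁, boxL2 H Sg Pg Γ Δ A h₁]

lemma boxR1_of_mem (d : Dir) (h : d.box A ∈ Δ)
    (h₁ : Deriv (plug (H ++ [(Sg, A ::ₘ Pg, d.flip)]) (.single Γ Δ)))
    (h₂ : Deriv (plug (H ++ [(Sg, Pg, d.flip)] ++ [(Γ, Δ, d)]) (.single 0 {A}))) :
    Deriv (plug (H ++ [(Sg, Pg, d.flip)]) (.single Γ Δ)) := by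
  obtain ⟨Δ, rfl⟩ := Multiset.exists_cons_of_mem h
  cases d <;> simp only [plug_append, plug] at h₁ h₂ ⊢
  exacts [boxR1 H Sg Pg Γ Δ A h₁ h₂, bboxR1 H Sg Pg Γ Δ A h₁ h₂]

lemma boxR2_of_mem (d : Dir) (h : d.box A ∈ Δ) (hG : lastDir G ≠ some d.flip)
    (h₁ : Deriv (plug (G ++ [(Γ, Δ, d)]) (.single 0 {A}))) : Deriv (plug G (.single Γ Δ)) := by
  obtain ⟨Δ, rfl⟩ := Multiset.exists_cons_of_mem h
  cases d <;> simp only [plug_append, plug] at h₁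
  exacts [boxR2 G Γ Δ A hG h₁, bboxR2 G Γ Δ A hG h₁]

end Deriv

namespace Formula

def mdepth : Formula → ℕ
  | .atom _ => 0
  | .bot => 0
  | .imp A B => max A.mdepth B.mdepth
  | .box A => A.mdepth + 1
  | .dia A => A.mdepth + 1
  | .bbox A => A.mdepth + 1
  | .bdia A => A.mdepth + 1

def subf : Formula → Finset Formula
  | .atom p => {.atom p}
  | .bot => {.bot}
  | .imp A B => insert (A.imp B) (A.subf ∪ B.subf)
  | .box A => insert A.box A.subf
  | .dia A => insert A.dia A.subf
  | .bbox A => insert A.bbox A.subf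
  | .bdia A => insert A.bdia A.subf

lemma mem_subf_self (A : Formula) : A ∈ A.subf := by
  cases A <;> simp [subf]

lemma subf_subset_of_mem {A B : Formula} (h : B ∈ A.subf) : B.subf ⊆ A.subf := by
  induction A with
  | atom | bot => simp_all [subf]
  | imp A₁ A₂ ih₁ ih₂ =>
    simp only [subf, Finset.mem_insert, Finset.mem_union] at h ⊢
    rcases h with rfl | h | h
    · rfl
    · exact (ih₁ h).trans (Finset.subset_union_left.trans (Finset.subset_insert _ _))
    · exact (ih₂ h).trans (Finset.subset_union_right.trans (Finset.subset_insert _ _))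
  | box A ih | dia A ih | bbox A ih | bdia A ih =>
    simp only [subf, Finset.mem_insert] at h ⊢
    rcases h with rfl | h
    · rfl
    · exact (ih h).trans (Finset.subset_insert _ _)

end Formula

/-- `L k` plays the role of the subformulas of modal depth at most `k`. -/
structure GradedClosure (L : ℕ → Finset Formula) : Prop where
  imp_mem : ∀ {k A B}, Formula.imp A B ∈ L k → A ∈ L k ∧ B ∈ L k
  box_mem : ∀ {k} {d : Dir} {A}, d.box A ∈ L k → ∃ j, k = j + 1 ∧ A ∈ L j
  mono : ∀ k, L k ⊆ L (k + 1)

lemma GradedClosure.mem_of_le {L : ℕ → Finset Formula} (hL : GradedClosure L) {j k : ℕ}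
    (hjk : j ≤ k) {A : Formula} (h : A ∈ L j) : A ∈ L k :=
  monotone_nat_of_le_succ hL.mono hjk h

def Formula.levels (φ : Formula) (k : ℕ) : Finset Formula :=
  φ.subf.filter (·.mdepth ≤ k)

lemma Formula.gradedClosure_levels (φ : Formula) : GradedClosure φ.levels where
  imp_mem {k A B} h := by
    simp only [Formula.levels, Finset.mem_filter, Formula.mdepth, max_le_iff] at h ⊢
    have hsub := Formula.subf_subset_of_mem h.1
    refine ⟨⟨hsub ?_, h.2.1⟩, ⟨hsub ?_, h.2.2⟩⟩ <;> simp [Formula.subf, Formula.mem_subf_self]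
  box_mem {k d A} h := by
    simp only [Formula.levels, Finset.mem_filter] at h ⊢
    have hA : A ∈ (d.box A).subf := by
      cases d <;> simp [Dir.box, Formula.subf, Formula.mem_subf_self]
    have hd : (d.box A).mdepth = A.mdepth + 1 := by cases d <;> rfl
    exact ⟨k - 1, by omega, Formula.subf_subset_of_mem h.1 hA, by omega⟩
  mono k A h := by
    simp only [Formula.levels, Finset.mem_filter] at h ⊢
    exact ⟨h.1, by omega⟩

section Search

variable {F : Finset Formula} {G : Ctx} {Γ Δ Γ' Δ' : Multiset Formula} {A B : Formula}

def gap (F : Finset Formula) (Γ Δ : Multiset Formula) : ℕ :=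
  (F.filter (· ∉ Γ)).card + (F.filter (· ∉ Δ)).card

lemma card_filter_notMem_le (h : Γ ⊆ Γ') :
    (F.filter (· ∉ Γ')).card ≤ (F.filter (· ∉ Γ)).card :=
  Finset.card_le_card (Finset.monotone_filter_right _ fun _ _ hA hA' => hA (h hA'))

lemma card_filter_notMem_lt (h : Γ ⊆ Γ') (hA : A ∈ F) (hAΓ' : A ∈ Γ') (hAΓ : A ∉ Γ) :
    (F.filter (· ∉ Γ')).card < (F.filter (· ∉ Γ)).card := by
  refine Finset.card_lt_card ((Finset.ssubset_iff_of_subset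
    (Finset.monotone_filter_right _ fun _ _ hB hB' => hB (h hB'))).2 ⟨A, ?_, ?_⟩) <;> simp [*]

lemma gap_lt (hΓ : Γ ⊆ Γ') (hΔ : Δ ⊆ Δ')
    (h : ∃ A ∈ F, A ∈ Γ' ∧ A ∉ Γ ∨ A ∈ Δ' ∧ A ∉ Δ) : gap F Γ' Δ' < gap F Γ Δ := by
  obtain ⟨A, hA, ⟨hA', hAn⟩ | ⟨hA', hAn⟩⟩ := h
  · have := card_filter_notMem_lt hΓ hA hA' hAn
    have := card_filter_notMem_le (F := F) hΔ
    unfold gap; omega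
  · have := card_filter_notMem_le (F := F) hΓ
    have := card_filter_notMem_lt hΔ hA hA' hAn
    unfold gap; omega

def Extensible (F : Finset Formula) (G : Ctx) (Γ Δ : Multiset Formula) : Prop :=
  ∃ Γ' Δ', Γ ⊆ Γ' ∧ Δ ⊆ Δ' ∧ (∀ A ∈ Γ', A ∈ F) ∧ (∀ A ∈ Δ', A ∈ F) ∧
    gap F Γ' Δ' < gap F Γ Δ ∧ ¬ Deriv (plug G (.single Γ' Δ'))

lemma extensible_cons_left (hΓ : ∀ C ∈ Γ, C ∈ F) (hΔ : ∀ C ∈ Δ, C ∈ F) (hA : A ∈ F)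
    (hAΓ : A ∉ Γ) (h : ¬ Deriv (plug G (.single (A ::ₘ Γ) Δ))) : Extensible F G Γ Δ :=
  ⟨_, _, Multiset.subset_cons _ _, Multiset.Subset.refl _, Multiset.forall_mem_cons.2 ⟨hA, hΓ⟩,
    hΔ, gap_lt (Multiset.subset_cons _ _) (Multiset.Subset.refl _)
      ⟨A, hA, .inl ⟨Multiset.mem_cons_self _ _, hAΓ⟩⟩, h⟩

lemma extensible_cons_right (hΓ : ∀ C ∈ Γ, C ∈ F) (hΔ : ∀ C ∈ Δ, C ∈ F) (hA : A ∈ F)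
    (hAΔ : A ∉ Δ) (h : ¬ Deriv (plug G (.single Γ (A ::ₘ Δ)))) : Extensible F G Γ Δ :=
  ⟨_, _, Multiset.Subset.refl _, Multiset.subset_cons _ _, hΓ,
    Multiset.forall_mem_cons.2 ⟨hA, hΔ⟩, gap_lt (Multiset.Subset.refl _) (Multiset.subset_cons _ _)
      ⟨A, hA, .inr ⟨Multiset.mem_cons_self _ _, hAΔ⟩⟩, h⟩

lemma extensible_cons_cons (hΓ : ∀ C ∈ Γ, C ∈ F) (hΔ : ∀ C ∈ Δ, C ∈ F) (hA : A ∈ F)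
    (hB : B ∈ F) (hnew : A ∉ Γ ∨ B ∉ Δ) (h : ¬ Deriv (plug G (.single (A ::ₘ Γ) (B ::ₘ Δ)))) :
    Extensible F G Γ Δ := by
  refine ⟨_, _, Multiset.subset_cons _ _, Multiset.subset_cons _ _,
    Multiset.forall_mem_cons.2 ⟨hA, hΓ⟩, Multiset.forall_mem_cons.2 ⟨hB, hΔ⟩,
    gap_lt (Multiset.subset_cons _ _) (Multiset.subset_cons _ _) ?_, h⟩
  rcases hnew with hn | hn
  exacts [⟨A, hA, .inl ⟨Multiset.mem_cons_self _ _, hn⟩⟩,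
    ⟨B, hB, .inr ⟨Multiset.mem_cons_self _ _, hn⟩⟩]

lemma saturated_or_extensible (hF : ∀ A B, A.imp B ∈ F → A ∈ F ∧ B ∈ F)
    (hΓ : ∀ C ∈ Γ, C ∈ F) (hΔ : ∀ C ∈ Δ, C ∈ F) (h : ¬ Deriv (plug G (.single Γ Δ))) :
    Saturated Γ Δ ∨ Extensible F G Γ Δ := by
  by_cases hext : Extensible F G Γ Δ
  · exact .inr hext
  refine .inl ⟨fun p hpΓ hpΔ => h (.of_atom_mem hpΓ hpΔ), fun hb => h (.of_bot_mem hb), ?_, ?_⟩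
  · intro A B hAB
    obtain ⟨hA, hB⟩ := hF A B (hΓ _ hAB)
    by_contra! hn
    by_cases hBd : Deriv (plug G (.single (B ::ₘ Γ) Δ))
    · exact hext (extensible_cons_right hΓ hΔ hA hn.2 fun hAd => h (.impL_of_mem hAB hBd hAd))
    · exact hext (extensible_cons_left hΓ hΔ hB hn.1 hBd)
  · intro A B hAB
    obtain ⟨hA, hB⟩ := hF A B (hΔ _ hAB)
    by_contra hn
    exact hext (extensible_cons_cons hΓ hΔ hA hB (not_and_or.1 hn)
      fun hd => h (.impR_of_mem hAB hd))

variable {L : ℕ → Finset Formula} {k : ℕ}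

def ParentBounded (L : ℕ → Finset Formula) (k : ℕ) (G : Ctx) : Prop :=
  ∀ Sg Pg d, G.getLast? = some (Sg, Pg, d) → (∀ A ∈ Sg, A ∈ L (k + 1)) ∧ ∀ A ∈ Pg, A ∈ L (k + 1)

/-- Search below a component can force formulas into that component itself (■ flowing back
along ↗, □ along ↙, and the two-premise rules □_R^1, ■_R^1); the component is then searched
again from the larger sequent. -/
def ParentExtensible (L : ℕ → Finset Formula) (k : ℕ) (G : Ctx) : Prop :=
  ∃ H Sg Pg d, G = H ++ [(Sg, Pg, d)] ∧ Extensible (L (k + 1)) H Sg Pg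

lemma flowsFrom_or_extensible (hL : GradedClosure L) (hpar : ParentBounded L k G)
    (hΓ : ∀ C ∈ Γ, C ∈ L k) (hΔ : ∀ C ∈ Δ, C ∈ L k) (h : ¬ Deriv (plug G (.single Γ Δ))) :
    FlowsFrom G.getLast? Γ ∨ Extensible (L k) G Γ Δ ∨ ParentExtensible L k G := by
  by_cases hext : Extensible (L k) G Γ Δ ∨ ParentExtensible L k G
  · exact .inr hext
  obtain ⟨hext, hpext⟩ := not_or.1 hext
  refine .inl fun Sg Pg d hG => ?_
  obtain ⟨hSg, hPg⟩ := hpar Sg Pg d hG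
  obtain ⟨H, rfl⟩ := List.getLast?_eq_some_iff.1 hG
  constructor
  · intro A hA
    by_contra hAΓ
    obtain ⟨j, hj, hAj⟩ := hL.box_mem (hSg _ hA)
    obtain rfl : j = k := by omega
    exact hext (extensible_cons_left hΓ hΔ hAj hAΓ fun hd => h (.boxL1_of_mem d hA hd))
  · intro A hA
    by_contra hASg
    obtain ⟨j, rfl, hAj⟩ := hL.box_mem (hΓ _ hA)
    exact hpext ⟨H, Sg, Pg, d, rfl, extensible_cons_left hSg hPg (hL.mem_of_le (by omega) hAj)
      hASg fun hd => h (.boxL2_of_mem d hA hd)⟩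

def SearchSucceedsAt (L : ℕ → Finset Formula) (k : ℕ) : Prop :=
  ∀ G Γ Δ, ParentBounded L k G → (∀ A ∈ Γ, A ∈ L k) → (∀ A ∈ Δ, A ∈ L k) →
    ¬ Deriv (plug G (.single Γ Δ)) →
    ParentExtensible L k G ∨ ∃ T, Good G.getLast? T ∧ Γ ⊆ T.ante ∧ Δ ⊆ T.succ

lemma child_or_extensible (hL : GradedClosure L) (ih : ∀ j < k, SearchSucceedsAt L j)
    (hpar : ParentBounded L k G) (hΓ : ∀ C ∈ Γ, C ∈ L k) (hΔ : ∀ C ∈ Δ, C ∈ L k)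
    (h : ¬ Deriv (plug G (.single Γ Δ))) {d : Dir} (hA : d.box A ∈ Δ)
    (hnw : ¬ ParentWitness G.getLast? d A) :
    Extensible (L k) G Γ Δ ∨ ParentExtensible L k G ∨
      ∃ N, Good (some (Γ, Δ, d)) N ∧ A ∈ N.succ := by
  obtain ⟨j, rfl, hAj⟩ := hL.box_mem (hΔ _ hA)
  have hchild : ¬ Deriv (plug (G ++ [(Γ, Δ, d)]) (.single 0 {A})) ∨
      ParentExtensible L (j + 1) G := by
    rcases G.eq_nil_or_concat' with rfl | ⟨H, ⟨Sg, Pg, e⟩, rfl⟩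
    · exact .inl fun hc => h (.boxR2_of_mem d hA (by simp [lastDir]) hc)
    by_cases he : e = d.flip
    · subst he
      have hAPg : A ∉ Pg := fun hAPg => hnw ⟨Sg, Pg, by simp, hAPg⟩
      obtain ⟨hSg, hPg⟩ := hpar Sg Pg d.flip (by simp)
      by_cases h₁ : Deriv (plug (H ++ [(Sg, A ::ₘ Pg, d.flip)]) (.single Γ Δ))
      · exact .inl fun hc => h (.boxR1_of_mem d hA h₁ hc)
      · exact .inr ⟨H, Sg, Pg, d.flip, rfl, extensible_cons_right hSg hPg
          (hL.mem_of_le (by omega) hAj) hAPg fun hd => h₁ (.ew H Sg (A ::ₘ Pg) d.flip Γ Δ hd)⟩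
    · exact .inl fun hc => h (.boxR2_of_mem d hA (by simpa [lastDir_eq_getLast?] using he) hc)
  rcases hchild with hchild | hpext
  · have hpar' : ParentBounded L j (G ++ [(Γ, Δ, d)]) := fun Sg Pg e he => by
      simp only [List.getLast?_append, List.getLast?_singleton, Option.some_or,
        Option.some.injEq, Prod.mk.injEq] at he
      obtain ⟨rfl, rfl, rfl⟩ := he
      exact ⟨hΓ, hΔ⟩
    rcases ih j (by omega) _ 0 {A} hpar' (by simp) (by simpa using hAj) hchild with
      ⟨H, Sg, Pg, e, hG, hext⟩ | ⟨N, hN, -, hAN⟩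
    · obtain ⟨rfl, hx⟩ := List.append_inj' hG rfl
      simp only [List.cons.injEq, Prod.mk.injEq, and_true] at hx
      obtain ⟨rfl, rfl, rfl⟩ := hx
      exact .inl hext
    · exact .inr (.inr ⟨N, by simpa using hN, hAN (Multiset.mem_singleton_self A)⟩)
  · exact .inr (.inl hpext)

lemma good_or_extensible (hL : GradedClosure L) (ih : ∀ j < k, SearchSucceedsAt L j)
    (hpar : ParentBounded L k G) (hΓ : ∀ C ∈ Γ, C ∈ L k) (hΔ : ∀ C ∈ Δ, C ∈ L k)
    (h : ¬ Deriv (plug G (.single Γ Δ))) (hsat : Saturated Γ Δ)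
    (hflows : FlowsFrom G.getLast? Γ) :
    Extensible (L k) G Γ Δ ∨ ParentExtensible L k G ∨
      ∃ T, Good G.getLast? T ∧ T.ante = Γ ∧ T.succ = Δ := by
  by_cases hext : Extensible (L k) G Γ Δ ∨ ParentExtensible L k G
  · exact hext.elim .inl (.inr ∘ .inl)
  have hfin : {x : Dir × Formula | x.1.box x.2 ∈ Δ ∧ ¬ ParentWitness G.getLast? x.1 x.2}.Finite :=
    (Δ.toFinset.finite_toSet.preimage (f := fun x : Dir × Formula => x.1.box x.2)
      fun x _ y _ hxy => Prod.ext (Dir.box_inj.1 hxy).1 (Dir.box_inj.1 hxy).2).subset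
      fun x hx => by simpa using hx.1
  obtain ⟨ch, hch, hcov⟩ := hfin.exists_list_forall_exists
      (p := fun x (c : Dir × SearchTree) =>
        c.1 = x.1 ∧ Good (some (Γ, Δ, x.1)) c.2 ∧ x.2 ∈ c.2.succ) fun x hx => by
      rcases child_or_extensible hL ih hpar hΓ hΔ h hx.1 hx.2 with h' | h' | ⟨N, hN, hAN⟩
      · exact absurd (.inl h') hext
      · exact absurd (.inr h') hext
      · exact ⟨(x.1, N), rfl, hN, hAN⟩
  refine .inr (.inr ⟨⟨Γ, Δ, ch⟩, .mk hsat hflows (fun d A hA => ?_) (fun d N hN => ?_), rfl, rfl⟩)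
  · by_cases hw : ParentWitness G.getLast? d A
    · exact .inl hw
    · obtain ⟨⟨e, N⟩, hN, hed, -, hAN⟩ := hcov (d, A) ⟨hA, hw⟩
      obtain rfl : e = d := hed
      exact .inr ⟨N, hN, hAN⟩
  · obtain ⟨x, -, hx, hN', -⟩ := hch _ hN
    rwa [← hx] at hN'

theorem searchSucceedsAt (hL : GradedClosure L) (k : ℕ) : SearchSucceedsAt L k := by
  induction k using Nat.strong_induction_on with
  | _ k ih =>
  intro G Γ Δ hpar hΓ hΔ h
  obtain ⟨n, hn⟩ : ∃ n, gap (L k) Γ Δ = n := ⟨_, rfl⟩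
  induction n using Nat.strong_induction_on generalizing Γ Δ with
  | _ n ihn =>
  have restart : Extensible (L k) G Γ Δ →
      ParentExtensible L k G ∨ ∃ T, Good G.getLast? T ∧ Γ ⊆ T.ante ∧ Δ ⊆ T.succ := by
    rintro ⟨Γ', Δ', hΓΓ', hΔΔ', hΓ', hΔ', hgap, h'⟩
    refine (ihn _ (hn ▸ hgap) Γ' Δ' hΓ' hΔ' h' rfl).imp id ?_
    rintro ⟨T, hT, hΓT, hΔT⟩
    exact ⟨T, hT, Multiset.Subset.trans hΓΓ' hΓT, Multiset.Subset.trans hΔΔ' hΔT⟩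
  rcases saturated_or_extensible (fun _ _ => hL.imp_mem) hΓ hΔ h with hsat | hext
  · rcases flowsFrom_or_extensible hL hpar hΓ hΔ h with hflows | hext | hpext
    · rcases good_or_extensible hL ih hpar hΓ hΔ h hsat hflows with hext | hpext | ⟨T, hT, rfl, rfl⟩
      · exact restart hext
      · exact .inl hpext
      · exact .inr ⟨T, hT, Multiset.Subset.refl _, Multiset.Subset.refl _⟩
    · exact restart hext
    · exact .inl hpext
  · exact restart hext

theorem exists_good_of_not_deriv (hL : GradedClosure L) (hΓ : ∀ A ∈ Γ, A ∈ L k)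
    (hΔ : ∀ A ∈ Δ, A ∈ L k) (h : ¬ Deriv (.single Γ Δ)) :
    ∃ T, Good none T ∧ Γ ⊆ T.ante ∧ Δ ⊆ T.succ :=
  (searchSucceedsAt hL k [] Γ Δ (by simp [ParentBounded]) hΓ hΔ h).resolve_left
    (by simp [ParentExtensible])

end Search

/-- Adequacy of LNS_Kt: for formulas built from atoms, ⊥, →, □, ■, derivability
of `ε ⇒ φ` coincides with validity of `φ`. -/
theorem lnskt_adequate (φ : Formula) (hφ : φ.NoDia) :
    Deriv (LNS.single 0 {φ}) ↔ Valid φ := by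
  refine ⟨fun h W _ R V w => by simpa using force_tau_of_deriv h R V w, fun hv => ?_⟩
  by_contra h
  obtain ⟨T, hT, -, hφT⟩ := exists_good_of_not_deriv φ.gradedClosure_levels (k := φ.mdepth)
    (by simp) (by simp [Formula.levels, Formula.mem_subf_self]) h
  exact not_valid_of_good hT hφ (hφT (Multiset.mem_singleton_self φ)) hv
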